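/- Vertical composition of 2-tracks is well defined: let g, g', h, h' be 2-paths in M with g(1,·) = h(0,·) and g'(1,·) = h'(0,·); if A is a rank-2 homotopy from g to g', B is a rank-2 homotopy from h to h', and A(r,1,·) = B(r,0,·) for all r ∈ ℝ, then the vertical composition g·h is rank-2 homotopic to g'·h'. -/

import Mathlib

open scoped Manifold

variable (E : Type*) [NormedAddCommGroup E] [NormedSpace ℝ E] [FiniteDimensional ℝ E]
variable {M : Type*} [TopologicalSpace M] [ChartedSpace E M]
  [IsManifold 𝓘(ℝ, E) ((⊤ : ℕ∞) : WithTop ℕ∞) M]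

/-- A 1-path in `M`: a smooth map `ℝ → M` that is constant near `(-∞, 0]` and near
`[1, ∞)` (in the sense of the `ε`-conditions). -/
def IsOnePath (γ : ℝ → M) : Prop :=
  ContMDiff 𝓘(ℝ, ℝ) 𝓘(ℝ, E) (⊤ : ℕ∞) γ ∧
    ∃ ε > (0 : ℝ), (∀ t ≤ ε, γ t = γ 0) ∧ (∀ t, 1 - ε ≤ t → γ t = γ 1)

/-- A 2-path in `M`, as a smooth map `ℝ × ℝ → M` with coordinates `(s, t)`,
constant near the boundary in each variable, whose images at `t = 0` and `t = 1`
are single points. -/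
def IsTwoPath (g : ℝ × ℝ → M) : Prop :=
  ContMDiff 𝓘(ℝ, ℝ × ℝ) 𝓘(ℝ, E) (⊤ : ℕ∞) g ∧
    (∃ ε > (0 : ℝ),
      (∀ s t, s ≤ ε → g (s, t) = g (0, t)) ∧
      (∀ s t, 1 - ε ≤ s → g (s, t) = g (1, t)) ∧
      (∀ s t, t ≤ ε → g (s, t) = g (s, 0)) ∧
      (∀ s t, 1 - ε ≤ t → g (s, t) = g (s, 1))) ∧
    (∀ s s', g (s, 0) = g (s', 0)) ∧ (∀ s s', g (s, 1) = g (s', 1))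

/-- A rank-1 homotopy: a 2-path whose differential has rank at most 1 at every point. -/
def IsRank1Homotopy (h : ℝ × ℝ → M) : Prop :=
  IsTwoPath E h ∧
    ∀ p : ℝ × ℝ,
      Module.finrank ℝ
        (LinearMap.range (mfderiv 𝓘(ℝ, ℝ × ℝ) 𝓘(ℝ, E) h p).toLinearMap) ≤ 1

/-- Two 1-paths are rank-1 homotopic if they are joined by a rank-1 homotopy. -/
def Rank1Homotopic (γ γ' : ℝ → M) : Prop :=
  ∃ h : ℝ × ℝ → M, IsRank1Homotopy E h ∧ (∀ t, h (0, t) = γ t) ∧ (∀ t, h (1, t) = γ' t)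

/-- A 3-path in `M`, as a smooth map `ℝ × ℝ × ℝ → M` with coordinates `(r, s, t)`. -/
def IsThreePath (α : ℝ × ℝ × ℝ → M) : Prop :=
  ContMDiff 𝓘(ℝ, ℝ × ℝ × ℝ) 𝓘(ℝ, E) (⊤ : ℕ∞) α ∧
    (∃ ε > (0 : ℝ),
      (∀ r s t, r ≤ ε → α (r, s, t) = α (0, s, t)) ∧
      (∀ r s t, 1 - ε ≤ r → α (r, s, t) = α (1, s, t)) ∧
      (∀ r s t, s ≤ ε → α (r, s, t) = α (r, 0, t)) ∧
      (∀ r s t, 1 - ε ≤ s → α (r, s, t) = α (r, 1, t)) ∧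
      (∀ r s t, t ≤ ε → α (r, s, t) = α (r, s, 0)) ∧
      (∀ r s t, 1 - ε ≤ t → α (r, s, t) = α (r, s, 1))) ∧
    (∀ r s r' s', α (r, s, 0) = α (r', s', 0)) ∧
    (∀ r s r' s', α (r, s, 1) = α (r', s', 1))

/-- A rank-2 homotopy: a 3-path whose differential has rank at most 2 at every point and
whose restrictions to `s = 0` and `s = 1` are rank-1 homotopies. -/
def IsRank2Homotopy (α : ℝ × ℝ × ℝ → M) : Prop :=
  IsThreePath E α ∧
    (∀ p : ℝ × ℝ × ℝ,
      Module.finrank ℝ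
        (LinearMap.range (mfderiv 𝓘(ℝ, ℝ × ℝ × ℝ) 𝓘(ℝ, E) α p).toLinearMap) ≤ 2) ∧
    IsRank1Homotopy E (fun p : ℝ × ℝ => α (p.1, 0, p.2)) ∧
    IsRank1Homotopy E (fun p : ℝ × ℝ => α (p.1, 1, p.2))

/-- `α` is a rank-2 homotopy from the 2-path `g` to the 2-path `g'`. -/
def Rank2HomotopyFrom (α : ℝ × ℝ × ℝ → M) (g g' : ℝ × ℝ → M) : Prop :=
  IsRank2Homotopy E α ∧ (∀ s t, α (0, s, t) = g (s, t)) ∧ (∀ s t, α (1, s, t) = g' (s, t))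

/-- Two 2-paths are rank-2 homotopic if they are joined by a rank-2 homotopy. -/
def Rank2Homotopic (g g' : ℝ × ℝ → M) : Prop :=
  ∃ α : ℝ × ℝ × ℝ → M, Rank2HomotopyFrom E α g g'

/-- Vertical composition of 2-paths. -/
noncomputable def vertComp (g h : ℝ × ℝ → M) : ℝ × ℝ → M := fun p =>
  if p.1 ≤ 1 / 2 then g (2 * p.1, p.2) else h (2 * p.1 - 1, p.2)

/-! Stack `A` and `B` along the middle variable `s`, with `A` on `s ∈ [0, 1/2]` and `B` on
`s ∈ [1/2, 1]`. Near the seam both are constant in `s` and agree there, so around every point the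
glued map is `A` or `B` precomposed with an affine map; hence it is smooth with differential of
rank at most 2. Its faces `s = 0` and `s = 1` are those of `A` and `B`, and at `r = 0` and `r = 1`
it restricts to `g · h` and `g' · h'`. -/

open scoped Topology

section Gluing

variable {X : Type*} {A B : ℝ × ℝ × ℝ → X}

/-- The `ε`-conditions of `IsThreePath`. -/
def IsCollared (ε : ℝ) (α : ℝ × ℝ × ℝ → X) : Prop :=
  (∀ r s t, r ≤ ε → α (r, s, t) = α (0, s, t)) ∧
    (∀ r s t, 1 - ε ≤ r → α (r, s, t) = α (1, s, t)) ∧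
    (∀ r s t, s ≤ ε → α (r, s, t) = α (r, 0, t)) ∧
    (∀ r s t, 1 - ε ≤ s → α (r, s, t) = α (r, 1, t)) ∧
    (∀ r s t, t ≤ ε → α (r, s, t) = α (r, s, 0)) ∧
    (∀ r s t, 1 - ε ≤ t → α (r, s, t) = α (r, s, 1))

theorem IsCollared.mono {ε δ : ℝ} {α : ℝ × ℝ × ℝ → X} (h : IsCollared ε α) (hδ : δ ≤ ε) :
    IsCollared δ α := by
  obtain ⟨h₁, h₂, h₃, h₄, h₅, h₆⟩ := h
  exact ⟨fun r s t hr => h₁ r s t (hr.trans hδ), fun r s t hr => h₂ r s t (by linarith),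
    fun r s t hs => h₃ r s t (hs.trans hδ), fun r s t hs => h₄ r s t (by linarith),
    fun r s t ht => h₅ r s t (ht.trans hδ), fun r s t ht => h₆ r s t (by linarith)⟩

noncomputable def midComp (A B : ℝ × ℝ × ℝ → X) : ℝ × ℝ × ℝ → X := fun p =>
  if p.2.1 ≤ 1 / 2 then A (p.1, 2 * p.2.1, p.2.2) else B (p.1, 2 * p.2.1 - 1, p.2.2)

theorem midComp_apply_zero (r t : ℝ) : midComp A B (r, 0, t) = A (r, 0, t) := by
  simp [midComp]

theorem midComp_apply_one (r t : ℝ) : midComp A B (r, 1, t) = B (r, 1, t) := by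
  norm_num [midComp]

theorem isCollared_midComp {ε : ℝ} (hA : IsCollared ε A) (hB : IsCollared ε B) (hε₀ : 0 ≤ ε)
    (hε₁ : ε ≤ 1 / 2) :
    IsCollared (ε / 2) (midComp A B) := by
  obtain ⟨hA₁, hA₂, hA₃, -, hA₅, hA₆⟩ := hA
  obtain ⟨hB₁, hB₂, -, hB₄, hB₅, hB₆⟩ := hB
  refine ⟨fun r s t hr => ?_, fun r s t hr => ?_, fun r s t hs => ?_, fun r s t hs => ?_,
    fun r s t ht => ?_, fun r s t ht => ?_⟩ <;> dsimp only [midComp]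
  · split_ifs
    exacts [hA₁ _ _ _ (by linarith), hB₁ _ _ _ (by linarith)]
  · split_ifs
    exacts [hA₂ _ _ _ (by linarith), hB₂ _ _ _ (by linarith)]
  · rw [if_pos (by linarith), if_pos (by norm_num), mul_zero]
    exact hA₃ _ _ _ (by linarith)
  · rw [if_neg (by linarith), if_neg (by norm_num)]
    norm_num [hB₄ r (2 * s - 1) t (by linarith)]
  · split_ifs
    exacts [hA₅ _ _ _ (by linarith), hB₅ _ _ _ (by linarith)]
  · split_ifs
    exacts [hA₆ _ _ _ (by linarith), hB₆ _ _ _ (by linarith)]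

theorem midComp_eq_left {ε : ℝ} (hA : IsCollared ε A) (hB : IsCollared ε B)
    (hAB : ∀ r t, A (r, 1, t) = B (r, 0, t)) {p : ℝ × ℝ × ℝ} (hp : p.2.1 < 1 / 2 + ε / 2) :
    midComp A B p = A (p.1, 2 * p.2.1, p.2.2) := by
  unfold midComp
  split_ifs with hs
  · rfl
  · rw [hB.2.2.1 _ _ _ (by linarith), hA.2.2.2.1 _ _ _ (by linarith), hAB]

theorem midComp_eq_right {ε : ℝ} (hA : IsCollared ε A) (hB : IsCollared ε B)
    (hAB : ∀ r t, A (r, 1, t) = B (r, 0, t)) {p : ℝ × ℝ × ℝ} (hp : 1 / 2 - ε / 2 < p.2.1) :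
    midComp A B p = B (p.1, 2 * p.2.1 - 1, p.2.2) := by
  unfold midComp
  split_ifs with hs
  · rw [hB.2.2.1 _ _ _ (by linarith), hA.2.2.2.1 _ _ _ (by linarith), hAB]
  · rfl

theorem midComp_eventuallyEq {ε : ℝ} (hε : 0 < ε) (hA : IsCollared ε A) (hB : IsCollared ε B)
    (hAB : ∀ r t, A (r, 1, t) = B (r, 0, t)) (p : ℝ × ℝ × ℝ) :
    midComp A B =ᶠ[𝓝 p] A ∘ (fun q => (q.1, 2 * q.2.1, q.2.2)) ∨
      midComp A B =ᶠ[𝓝 p] B ∘ (fun q => (q.1, 2 * q.2.1 - 1, q.2.2)) := by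
  have hs : Continuous fun q : ℝ × ℝ × ℝ => q.2.1 := continuous_snd.fst
  rcases lt_or_ge p.2.1 (1 / 2 + ε / 2) with hp | hp
  · exact .inl <| (hs.continuousAt.eventually_lt continuousAt_const hp).mono
      fun q hq => midComp_eq_left hA hB hAB hq
  · exact .inr <| (continuousAt_const.eventually_lt hs.continuousAt (by linarith)).mono
      fun q hq => midComp_eq_right hA hB hAB hq

theorem midComp_apply_eq_of_const {t : ℝ}
    (hA : ∀ r s r' s', A (r, s, t) = A (r', s', t)) (hB : ∀ r s r' s', B (r, s, t) = B (r', s', t))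
    (hAB : A (0, 1, t) = B (0, 0, t)) (r s r' s' : ℝ) :
    midComp A B (r, s, t) = midComp A B (r', s', t) := by
  have key : ∀ r s, midComp A B (r, s, t) = A (0, 0, t) := by
    intro r s
    unfold midComp
    split_ifs
    exacts [hA _ _ _ _, (hB _ _ 0 0).trans (hAB.symm.trans (hA _ _ _ _))]
  rw [key, key]

end Gluing

section Manifold

variable {E : Type*} [NormedAddCommGroup E] [NormedSpace ℝ E]
  {M : Type*} [TopologicalSpace M] [ChartedSpace E M] {A B : ℝ × ℝ × ℝ → M}

theorem finrank_range_mfderiv_le_of_eventuallyEq_comp [FiniteDimensional ℝ E]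
    {E₁ E₂ : Type*} [NormedAddCommGroup E₁] [NormedSpace ℝ E₁]
    [NormedAddCommGroup E₂] [NormedSpace ℝ E₂]
    {f : E₁ → M} {F : E₂ → M} {L : E₁ → E₂} {p : E₁}
    (hf : f =ᶠ[𝓝 p] F ∘ L) (hF : MDifferentiableAt 𝓘(ℝ, E₂) 𝓘(ℝ, E) F (L p))
    (hL : DifferentiableAt ℝ L p) :
    Module.finrank ℝ (LinearMap.range (mfderiv 𝓘(ℝ, E₁) 𝓘(ℝ, E) f p).toLinearMap) ≤
      Module.finrank ℝ (LinearMap.range (mfderiv 𝓘(ℝ, E₂) 𝓘(ℝ, E) F (L p)).toLinearMap) := by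
  rw [hf.mfderiv_eq, mfderiv_comp p hF hL.mdifferentiableAt]
  have : FiniteDimensional ℝ (LinearMap.range (mfderiv 𝓘(ℝ, E₂) 𝓘(ℝ, E) F (L p)).toLinearMap) :=
    FiniteDimensional.finiteDimensional_submodule (K := ℝ) (V := E) _
  exact @Submodule.finrank_mono _ _ _ _ _ _ _ _ this (LinearMap.range_comp_le_range _ _)

theorem contMDiff_midComp {n : WithTop ℕ∞} {ε : ℝ} (hε : 0 < ε)
    (hAc : IsCollared ε A) (hBc : IsCollared ε B) (hAB : ∀ r t, A (r, 1, t) = B (r, 0, t))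
    (hA : ContMDiff 𝓘(ℝ, ℝ × ℝ × ℝ) 𝓘(ℝ, E) n A) (hB : ContMDiff 𝓘(ℝ, ℝ × ℝ × ℝ) 𝓘(ℝ, E) n B) :
    ContMDiff 𝓘(ℝ, ℝ × ℝ × ℝ) 𝓘(ℝ, E) n (midComp A B) := by
  intro p
  rcases midComp_eventuallyEq hε hAc hBc hAB p with h | h
  · exact ((hA.comp (contMDiff_iff_contDiff.2 (by fun_prop))) p).congr_of_eventuallyEq h
  · exact ((hB.comp (contMDiff_iff_contDiff.2 (by fun_prop))) p).congr_of_eventuallyEq h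

theorem finrank_range_mfderiv_midComp_le [FiniteDimensional ℝ E] {k : ℕ} {ε : ℝ} (hε : 0 < ε)
    (hAc : IsCollared ε A) (hBc : IsCollared ε B) (hAB : ∀ r t, A (r, 1, t) = B (r, 0, t))
    (hA : MDifferentiable 𝓘(ℝ, ℝ × ℝ × ℝ) 𝓘(ℝ, E) A)
    (hB : MDifferentiable 𝓘(ℝ, ℝ × ℝ × ℝ) 𝓘(ℝ, E) B)
    (hAk : ∀ p, Module.finrank ℝ
      (LinearMap.range (mfderiv 𝓘(ℝ, ℝ × ℝ × ℝ) 𝓘(ℝ, E) A p).toLinearMap) ≤ k)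
    (hBk : ∀ p, Module.finrank ℝ
      (LinearMap.range (mfderiv 𝓘(ℝ, ℝ × ℝ × ℝ) 𝓘(ℝ, E) B p).toLinearMap) ≤ k)
    (p : ℝ × ℝ × ℝ) :
    Module.finrank ℝ
      (LinearMap.range (mfderiv 𝓘(ℝ, ℝ × ℝ × ℝ) 𝓘(ℝ, E) (midComp A B) p).toLinearMap) ≤ k := by
  rcases midComp_eventuallyEq hε hAc hBc hAB p with h | h
  · exact (finrank_range_mfderiv_le_of_eventuallyEq_comp h (hA _) (by fun_prop)).trans (hAk _)
  · exact (finrank_range_mfderiv_le_of_eventuallyEq_comp h (hB _) (by fun_prop)).trans (hBk _)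

theorem IsThreePath.exists_isCollared (hA : IsThreePath E A) (hB : IsThreePath E B) :
    ∃ ε, 0 < ε ∧ ε ≤ 1 / 2 ∧ IsCollared ε A ∧ IsCollared ε B := by
  obtain ⟨-, ⟨εA, hεA, hAc⟩, -⟩ := hA
  obtain ⟨-, ⟨εB, hεB, hBc⟩, -⟩ := hB
  refine ⟨min (min εA εB) (1 / 2), lt_min (lt_min hεA hεB) one_half_pos, min_le_right _ _,
    IsCollared.mono hAc ?_, IsCollared.mono hBc ?_⟩ <;> simp

theorem isThreePath_midComp (hA : IsThreePath E A) (hB : IsThreePath E B)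
    (hAB : ∀ r t, A (r, 1, t) = B (r, 0, t)) : IsThreePath E (midComp A B) := by
  obtain ⟨ε, hε, hε₁, hAc, hBc⟩ := hA.exists_isCollared hB
  exact ⟨contMDiff_midComp hε hAc hBc hAB hA.1 hB.1,
    ⟨ε / 2, half_pos hε, isCollared_midComp hAc hBc hε.le hε₁⟩,
    midComp_apply_eq_of_const hA.2.2.1 hB.2.2.1 (hAB 0 0),
    midComp_apply_eq_of_const hA.2.2.2 hB.2.2.2 (hAB 0 1)⟩

theorem isRank2Homotopy_midComp [FiniteDimensional ℝ E] (hA : IsRank2Homotopy E A)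
    (hB : IsRank2Homotopy E B) (hAB : ∀ r t, A (r, 1, t) = B (r, 0, t)) :
    IsRank2Homotopy E (midComp A B) := by
  obtain ⟨hA, hAk, hA₀, -⟩ := hA
  obtain ⟨hB, hBk, -, hB₁⟩ := hB
  obtain ⟨ε, hε, -, hAc, hBc⟩ := hA.exists_isCollared hB
  exact ⟨isThreePath_midComp hA hB hAB,
    finrank_range_mfderiv_midComp_le hε hAc hBc hAB (hA.1.mdifferentiable (by simp))
      (hB.1.mdifferentiable (by simp)) hAk hBk,
    by simpa only [midComp_apply_zero] using hA₀, by simpa only [midComp_apply_one] using hB₁⟩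

theorem rank2HomotopyFrom_midComp [FiniteDimensional ℝ E] {g g' h h' : ℝ × ℝ → M}
    (hA : Rank2HomotopyFrom E A g g') (hB : Rank2HomotopyFrom E B h h')
    (hAB : ∀ r t, A (r, 1, t) = B (r, 0, t)) :
    Rank2HomotopyFrom E (midComp A B) (vertComp g h) (vertComp g' h') := by
  obtain ⟨hA, hA₀, hA₁⟩ := hA
  obtain ⟨hB, hB₀, hB₁⟩ := hB
  exact ⟨isRank2Homotopy_midComp hA hB hAB, fun s t => by simp only [midComp, vertComp, hA₀, hB₀],
    fun s t => by simp only [midComp, vertComp, hA₁, hB₁]⟩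

end Manifold

theorem vertComp_rank2Homotopic (g g' h h' : ℝ × ℝ → M) (A B : ℝ × ℝ × ℝ → M)
    (hA : Rank2HomotopyFrom E A g g') (hB : Rank2HomotopyFrom E B h h')
    (hAB : ∀ r t, A (r, 1, t) = B (r, 0, t)) :
    Rank2Homotopic E (vertComp g h) (vertComp g' h') :=
  ⟨midComp A B, rank2HomotopyFrom_midComp hA hB hAB⟩
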